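/- arXiv:math/0604315 — 6 statements merged into one kernel-verified Lean document; each statement's English description precedes it below -/
import Mathlib

section
/- Let (Ω, ℱ, P) be a probability space, X : Ω → ℝ integrable and Y : Ω → ℝ measurable. If the law of ω ↦ (X ω, Y ω) on ℝ² equals the law of ω ↦ (−X ω, Y ω), then E[X | σ(Y)] = 0 almost surely. -/
open MeasureTheory Set

/-! Integrating `X` over `{Y ∈ t}` is integrating `p.1` over `univ ×ˢ t` against the law of
`(X, Y)`. The symmetry of the law therefore turns this integral into its own negative, so every
such integral vanishes, and these sets are exactly the `σ(Y)`-measurable sets. -/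

section SetIntegral

variable {Ω β : Type*} [MeasurableSpace Ω] [MeasurableSpace β] {μ : Measure Ω} {Y : Ω → β}
  {t : Set β}

theorem setIntegral_preimage_eq_setIntegral_map_prod {Z : Ω → ℝ} (hZ : AEMeasurable Z μ)
    (hY : AEMeasurable Y μ) (ht : MeasurableSet t) :
    ∫ ω in Y ⁻¹' t, Z ω ∂μ = ∫ p in univ ×ˢ t, p.1 ∂μ.map (fun ω => (Z ω, Y ω)) := by
  rw [setIntegral_map (MeasurableSet.univ.prod ht) measurable_fst.aestronglyMeasurable
    (hZ.prodMk hY), mk_preimage_prod, preimage_univ, univ_inter]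

theorem setIntegral_preimage_eq_zero_of_map_prod_neg_eq {X : Ω → ℝ} (hX : AEMeasurable X μ)
    (hY : AEMeasurable Y μ)
    (hsym : μ.map (fun ω => (X ω, Y ω)) = μ.map (fun ω => (-X ω, Y ω)))
    (ht : MeasurableSet t) :
    ∫ ω in Y ⁻¹' t, X ω ∂μ = 0 := by
  have h_neg : ∫ ω in Y ⁻¹' t, X ω ∂μ = -∫ ω in Y ⁻¹' t, X ω ∂μ := by
    rw [← integral_neg, setIntegral_preimage_eq_setIntegral_map_prod hX hY ht, hsym,
      ← setIntegral_preimage_eq_setIntegral_map_prod (Z := fun ω => -X ω) hX.neg hY ht]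
  linarith

end SetIntegral

theorem condExp_comap_eq_zero_of_forall_setIntegral_preimage_eq_zero {Ω β E : Type*}
    [MeasurableSpace Ω] [MeasurableSpace β] [NormedAddCommGroup E] [NormedSpace ℝ E]
    [CompleteSpace E] {μ : Measure Ω} {X : Ω → E} {Y : Ω → β} (hY : Measurable Y)
    [SigmaFinite (μ.trim hY.comap_le)] (hX : Integrable X μ)
    (h_zero : ∀ t, MeasurableSet t → ∫ ω in Y ⁻¹' t, X ω ∂μ = 0) :
    μ[X | MeasurableSpace.comap Y inferInstance] =ᵐ[μ] 0 := by
  refine (ae_eq_condExp_of_forall_setIntegral_eq hY.comap_le hX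
    (fun _ _ _ => integrableOn_zero) ?_ aestronglyMeasurable_const).symm
  rintro s ⟨t, ht, rfl⟩ -
  rw [h_zero t ht]
  exact integral_zero _ _

theorem condexp_eq_zero_of_symmetric_law_general
    {Ω : Type*} [MeasurableSpace Ω] (P : Measure Ω) [IsProbabilityMeasure P]
    (X Y : Ω → ℝ) (hYm : Measurable Y)
    (hX : Integrable X P)
    (hsym : P.map (fun ω => (X ω, Y ω)) = P.map (fun ω => (-X ω, Y ω))) :
    P[X | MeasurableSpace.comap Y inferInstance] =ᵐ[P] 0 :=
  condExp_comap_eq_zero_of_forall_setIntegral_preimage_eq_zero hYm hX fun _ ht =>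
    setIntegral_preimage_eq_zero_of_map_prod_neg_eq hX.aemeasurable hYm.aemeasurable hsym ht

/-- Symmetry lemma: if the law of `(X, Y)` equals the law of `(-X, Y)`, then
`E[X | σ(Y)] = 0` almost surely. -/
theorem condexp_eq_zero_of_symmetric_law
    {Ω : Type*} [MeasurableSpace Ω] (P : Measure Ω) [IsProbabilityMeasure P]
    (X Y : Ω → ℝ) (hXm : Measurable X) (hYm : Measurable Y)
    (hX : Integrable X P)
    (hsym : P.map (fun ω => (X ω, Y ω)) = P.map (fun ω => (-X ω, Y ω))) :
    P[X | MeasurableSpace.comap Y inferInstance] =ᵐ[P] 0 :=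
  condexp_eq_zero_of_symmetric_law_general P X Y hYm hX hsym
end

section
/- Let (Ω, ℱ, P) be a probability space, B_t and B_{t+h} integrable real random variables (with h ≠ 0) such that the law of (B_t, B_{t+h}) on ℝ² equals the law of (−B_t, −B_{t+h}), and let g : ℝ → ℝ be a measurable even function (g(−x) = g(x) for all x). Then E[(B_{t+h} − B_t)/h | σ(g(B_t))] = 0 almost surely; in particular, if this symmetry holds for all small h, the conditional expectations converge (to 0) as h → 0, so σ(g(B_t)) is a forward and backward differentiating σ-field with derivative 0. -/
/-!
The reflection `(x, y) ↦ (-x, -y)` preserves the law of `(B_t, B_{t+h})`; it fixes every event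
`{g(B_t) ∈ S}` because `g` is even, while it flips the sign of the increment. Hence the increment
integrates to zero over every set of `σ(g(B_t))`, so its conditional expectation vanishes for
every `h`, and convergence in probability as `h ↓ 0` is trivial.
-/

open MeasureTheory ProbabilityTheory Filter Set
open scoped Topology

namespace MeasureTheory

section

variable {Ω G E : Type*} [MeasurableSpace Ω] [MeasurableSpace G] [AddGroup G] [MeasurableNeg G]
  [NormedAddCommGroup E] [NormedSpace ℝ E]

theorem integral_eq_zero_of_odd (μ : Measure G) [μ.IsNegInvariant] {f : G → E}
    (hf : ∀ x, f (-x) = -f x) : ∫ x, f x ∂μ = 0 := by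
  have h := integral_neg_eq_self f μ
  simp only [hf, integral_neg] at h
  have := IsAddTorsionFree.of_isTorsionFree ℝ E
  exact neg_eq_self.mp h

theorem Measure.isNegInvariant_map {P : Measure Ω} {Z : Ω → G} (hZ : Measurable Z)
    (hsym : P.map Z = P.map (-Z)) : (P.map Z).IsNegInvariant :=
  ⟨by rw [Measure.neg_def, Measure.map_map measurable_neg hZ, hsym]; rfl⟩

theorem condExp_odd_comap_even_eq_zero {β : Type*} [MeasurableSpace β] [CompleteSpace E]
    {P : Measure Ω} [IsFiniteMeasure P] {Z : Ω → G} (hZ : Measurable Z)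
    [(P.map Z).IsNegInvariant] {φ : G → E} (hφm : AEStronglyMeasurable φ (P.map Z))
    (hφ : ∀ x, φ (-x) = -φ x)
    (hφi : Integrable (fun ω => φ (Z ω)) P) {ψ : G → β} (hψm : Measurable ψ)
    (hψ : ∀ x, ψ (-x) = ψ x) :
    P[fun ω => φ (Z ω) | MeasurableSpace.comap (fun ω => ψ (Z ω)) inferInstance]
      =ᵐ[P] 0 := by
  have hm := (hψm.comp hZ).comap_le
  have : IsFiniteMeasure (P.trim hm) := isFiniteMeasure_trim hm
  refine (ae_eq_condExp_of_forall_setIntegral_eq hm hφi (fun _ _ _ => integrableOn_zero)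
    ?_ aestronglyMeasurable_const).symm
  rintro _ ⟨S, hS, rfl⟩ -
  have hodd : ∀ x, (ψ ⁻¹' S).indicator φ (-x) = -(ψ ⁻¹' S).indicator φ x := by
    intro x
    by_cases hx : ψ x ∈ S <;> simp [indicator, hψ, hφ, hx]
  rw [integral_zero, preimage_comp, ← setIntegral_map (hψm hS) hφm hZ.aemeasurable,
    ← integral_indicator (hψm hS), integral_eq_zero_of_odd _ hodd]

end

theorem tendstoInMeasure_of_eventually_ae_eq {ι α E : Type*} [MeasurableSpace α]
    [PseudoEMetricSpace E] {μ : Measure α} {l : Filter ι} {f : ι → α → E} {g : α → E}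
    (h : ∀ᶠ i in l, f i =ᵐ[μ] g) : TendstoInMeasure μ f l g := by
  have hconst : TendstoInMeasure μ (fun _ : ι => g) l g := fun ε hε => by
    simpa [not_le.mpr hε] using tendsto_const_nhds
  exact hconst.congr' (h.mono fun _ hi => hi.symm) EventuallyEq.rfl

end MeasureTheory

/-- Proposition 5(2): if the law of `(B_t, B_{t+h})` is symmetric under `(x,y) ↦ (-x,-y)`
(as holds for fractional Brownian motion) and `g` is even, then
`E[(B_{t+h} - B_t)/h | σ(g(B_t))] = 0` a.s. for every `h ≠ 0`; in particular the
conditional expectations converge (to `0`) in probability as `h ↓ 0`, both forward and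
backward, so `σ(g(B_t))` is a forward and backward differentiating σ-field with
derivative `0`. -/
theorem even_sigma_field_differentiating
    {Ω : Type*} [MeasurableSpace Ω] (P : Measure Ω) [IsProbabilityMeasure P]
    (B : ℝ → Ω → ℝ) (t : ℝ)
    (hBm : ∀ s, Measurable (B s)) (hBi : ∀ s, Integrable (B s) P)
    (hsym : ∀ h : ℝ, P.map (fun ω => (B t ω, B (t + h) ω))
      = P.map (fun ω => (-B t ω, -B (t + h) ω)))
    (g : ℝ → ℝ) (hgm : Measurable g) (hg : ∀ x, g (-x) = g x) :
    (∀ h : ℝ, h ≠ 0 →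
      P[fun ω => (B (t + h) ω - B t ω) / h |
        MeasurableSpace.comap (fun ω => g (B t ω)) inferInstance] =ᵐ[P] 0) ∧
    TendstoInMeasure P
      (fun h : ℝ => P[fun ω => (B (t + h) ω - B t ω) / h |
        MeasurableSpace.comap (fun ω => g (B t ω)) inferInstance])
      (𝓝[>] 0) (fun _ => (0 : ℝ)) ∧
    TendstoInMeasure P
      (fun h : ℝ => P[fun ω => (B t ω - B (t - h) ω) / h |
        MeasurableSpace.comap (fun ω => g (B t ω)) inferInstance])
      (𝓝[>] 0) (fun _ => (0 : ℝ)) := by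
  have forward (h : ℝ) : P[fun ω => (B (t + h) ω - B t ω) / h |
      MeasurableSpace.comap (fun ω => g (B t ω)) inferInstance] =ᵐ[P] 0 := by
    have hZ := (hBm t).prodMk (hBm (t + h))
    have := Measure.isNegInvariant_map hZ (hsym h)
    exact condExp_odd_comap_even_eq_zero hZ (φ := fun p : ℝ × ℝ => (p.2 - p.1) / h)
      (by fun_prop : Measurable _).aestronglyMeasurable
      (fun p => by simp only [Prod.fst_neg, Prod.snd_neg]; ring)
      (((hBi (t + h)).sub (hBi t)).div_const h) (hgm.comp measurable_fst) (fun p => hg p.1)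
  have backward (h : ℝ) : P[fun ω => (B t ω - B (t - h) ω) / h |
      MeasurableSpace.comap (fun ω => g (B t ω)) inferInstance] =ᵐ[P] 0 := by
    have hinc : (fun ω => (B t ω - B (t - h) ω) / h)
        = fun ω => (B (t + -h) ω - B t ω) / -h := by
      funext ω
      rw [← sub_eq_add_neg, div_neg, ← neg_div, neg_sub]
    rw [hinc]
    exact forward (-h)
  exact ⟨fun h _ => forward h, tendstoInMeasure_of_eventually_ae_eq (.of_forall forward),
    tendstoInMeasure_of_eventually_ae_eq (.of_forall backward)⟩
end

section
/- Let H ∈ (1/2, 1) and define R(s,u) = (1/2)(s^{2H} + u^{2H} − |s−u|^{2H}) for s, u > 0. For h ∈ (0,1) set v₁(h) = R(1−h, 1) − R(1,1), v₂(h) = R(1−h, 1+h) − R(1, 1+h), and d(h) = R(1,1)·R(1+h,1+h) − R(1,1+h)². Then the quotient (R(1+h,1+h)·v₁(h)² − 2·R(1,1+h)·v₁(h)·v₂(h) + R(1,1)·v₂(h)²) / (d(h)·h²) tends to +∞ as h → 0 from the right. -/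
open Filter Set
open scoped Topology

set_option maxHeartbeats 1000000 in
theorem fbm_regression_variance_diverges (H : ℝ) (hH : H ∈ Set.Ioo (1/2 : ℝ) 1) :
    Filter.Tendsto (fun h : ℝ =>
      let R : ℝ → ℝ → ℝ := fun s u => (s ^ (2*H) + u ^ (2*H) - |s - u| ^ (2*H)) / 2
      let v₁ : ℝ := R (1 - h) 1 - R 1 1
      let v₂ : ℝ := R (1 - h) (1 + h) - R 1 (1 + h)
      let d : ℝ := R 1 1 * R (1 + h) (1 + h) - (R 1 (1 + h)) ^ 2
      (R (1 + h) (1 + h) * v₁ ^ 2 - 2 * R 1 (1 + h) * v₁ * v₂ + R 1 1 * v₂ ^ 2) / (d * h ^ 2))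
      (𝓝[>] 0) Filter.atTop := by
  obtain ⟨hH1, hH2⟩ := hH
  have h2H1 : (1:ℝ) < 2*H := by linarith
  have h2H2 : 2*H < 2 := by linarith
  set c₀ : ℝ := 2 ^ (2*H - 1) - 1 with hc₀def
  have hc₀pos : 0 < c₀ := by
    have h1 : (1:ℝ) < 2 ^ (2*H-1) := by
      rw [show (1:ℝ) = (2:ℝ) ^ (0:ℝ) by simp]
      exact Real.rpow_lt_rpow_left_iff (by norm_num) |>.mpr (by linarith)
    simp only [hc₀def]; linarith
  -- slope limit for (1+h)^(2H)
  have lα : Tendsto (fun h : ℝ => ((1+h) ^ (2*H) - 1) / h) (𝓝[>] (0:ℝ)) (𝓝 (2*H)) := by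
    have hinner : HasDerivAt (fun x : ℝ => 1 + x) 1 0 := (hasDerivAt_id (0:ℝ)).const_add 1
    have houter : HasDerivAt (fun y : ℝ => y ^ (2*H)) (2*H) ((1:ℝ) + 0) := by
      rw [add_zero]
      simpa using Real.hasDerivAt_rpow_const (x := (1:ℝ)) (p := 2*H) (Or.inl one_ne_zero)
    have h1 : HasDerivAt (fun x : ℝ => (1+x) ^ (2*H)) (2*H) 0 := by
      simpa [Function.comp_def] using houter.comp 0 hinner
    have hs := hasDerivAt_iff_tendsto_slope.mp h1
    refine Tendsto.congr' ?_ (hs.mono_left (nhdsWithin_mono 0 fun x hx => ne_of_gt hx))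
    filter_upwards [self_mem_nhdsWithin] with x hx
    simp [slope_def_field, Real.one_rpow]
  -- slope limit for (1-h)^(2H)
  have lβ : Tendsto (fun h : ℝ => ((1-h) ^ (2*H) - 1) / h) (𝓝[>] (0:ℝ)) (𝓝 (-(2*H))) := by
    have hinner : HasDerivAt (fun x : ℝ => 1 - x) (-1) 0 := (hasDerivAt_id (0:ℝ)).const_sub 1
    have houter : HasDerivAt (fun y : ℝ => y ^ (2*H)) (2*H) ((1:ℝ) - 0) := by
      rw [sub_zero]
      simpa using Real.hasDerivAt_rpow_const (x := (1:ℝ)) (p := 2*H) (Or.inl one_ne_zero)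
    have h1 : HasDerivAt (fun x : ℝ => (1-x) ^ (2*H)) (-(2*H)) 0 := by
      have := houter.comp 0 hinner
      simpa [Function.comp_def] using this
    have hs := hasDerivAt_iff_tendsto_slope.mp h1
    refine Tendsto.congr' ?_ (hs.mono_left (nhdsWithin_mono 0 fun x hx => ne_of_gt hx))
    filter_upwards [self_mem_nhdsWithin] with x hx
    simp [slope_def_field, Real.one_rpow]
  -- small powers go to zero
  have l1 : Tendsto (fun h : ℝ => h ^ (2*H-1)) (𝓝[>] (0:ℝ)) (𝓝 0) := by
    have hc : ContinuousAt (fun x : ℝ => x ^ (2*H-1)) 0 :=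
      Real.continuousAt_rpow_const 0 _ (Or.inr (by linarith))
    have h' : Tendsto (fun x : ℝ => x ^ (2*H-1)) (𝓝[>] (0:ℝ)) (𝓝 ((0:ℝ) ^ (2*H-1))) :=
      hc.tendsto.mono_left nhdsWithin_le_nhds
    simpa [Real.zero_rpow (ne_of_gt (by linarith : (0:ℝ) < 2*H-1))] using h'
  have l2 : Tendsto (fun h : ℝ => h ^ (2-2*H)) (𝓝[>] (0:ℝ)) (𝓝 0) := by
    have hc : ContinuousAt (fun x : ℝ => x ^ (2-2*H)) 0 :=
      Real.continuousAt_rpow_const 0 _ (Or.inr (by linarith))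
    have h' : Tendsto (fun x : ℝ => x ^ (2-2*H)) (𝓝[>] (0:ℝ)) (𝓝 ((0:ℝ) ^ (2-2*H))) :=
      hc.tendsto.mono_left nhdsWithin_le_nhds
    simpa [Real.zero_rpow (ne_of_gt (by linarith : (0:ℝ) < 2-2*H))] using h'
  -- the diverging power
  have l3 : Tendsto (fun h : ℝ => h ^ (2*H-2)) (𝓝[>] (0:ℝ)) atTop := by
    have := (tendsto_rpow_atTop (y := 2-2*H) (by linarith)).comp tendsto_inv_nhdsGT_zero
    refine Tendsto.congr' ?_ this
    filter_upwards [self_mem_nhdsWithin] with x hx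
    have hx0 : (0:ℝ) < x := hx
    simp only [Function.comp_apply]
    rw [Real.inv_rpow hx0.le, ← Real.rpow_neg hx0.le, show -(2-2*H) = 2*H-2 by ring]
  -- composite limits
  have hW₁ : Tendsto (fun h : ℝ => (((1-h) ^ (2*H) - 1)/h - h ^ (2*H-1))/2)
      (𝓝[>] (0:ℝ)) (𝓝 ((-(2*H) - 0)/2)) := (lβ.sub l1).div_const 2
  have hW₂ : Tendsto (fun h : ℝ => (((1-h) ^ (2*H) - 1)/h - (2*c₀+1) * h ^ (2*H-1))/2)
      (𝓝[>] (0:ℝ)) (𝓝 ((-(2*H) - (2*c₀+1)*0)/2)) := (lβ.sub (l1.const_mul _)).div_const 2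
  have hΨ₁ : Tendsto (fun h : ℝ =>
      c₀^2 + ((((1+h) ^ (2*H) - 1)/h) * c₀ * ((((1-h) ^ (2*H) - 1)/h - h ^ (2*H-1))/2)
        + ((((1-h) ^ (2*H) - 1)/h - h ^ (2*H-1))/2)
          * ((((1-h) ^ (2*H) - 1)/h - (2*c₀+1) * h ^ (2*H-1))/2)) * h ^ (2-2*H))
      (𝓝[>] (0:ℝ)) (𝓝 (c₀^2)) := by
    have hconst : Tendsto (fun _ : ℝ => c₀^2) (𝓝[>] (0:ℝ)) (𝓝 (c₀^2)) := tendsto_const_nhds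
    have h' := hconst.add ((((lα.mul_const c₀).mul hW₁).add (hW₁.mul hW₂)).mul l2)
    convert h' using 2
    ring
  have hΨ₂ : Tendsto (fun h : ℝ =>
      (1 - (((1+h) ^ (2*H) - 1)/h - h ^ (2*H-1))^2 * h ^ (2-2*H)/4)⁻¹)
      (𝓝[>] (0:ℝ)) (𝓝 1) := by
    have hconst1 : Tendsto (fun _ : ℝ => (1:ℝ)) (𝓝[>] (0:ℝ)) (𝓝 (1:ℝ)) := tendsto_const_nhds
    have h' := hconst1.sub ((((lα.sub l1).pow 2).mul l2).div_const 4)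
    have h'' : Tendsto (fun h : ℝ =>
        1 - (((1+h) ^ (2*H) - 1)/h - h ^ (2*H-1))^2 * h ^ (2-2*H)/4)
        (𝓝[>] (0:ℝ)) (𝓝 1) := by
      convert h' using 2
      ring
    simpa using h''.inv₀ one_ne_zero
  have hΨ₂₃ := Filter.Tendsto.pos_mul_atTop one_pos hΨ₂ l3
  have hΦ := Filter.Tendsto.pos_mul_atTop (pow_pos hc₀pos 2) hΨ₁ hΨ₂₃
  refine Tendsto.congr' ?_ hΦ
  filter_upwards [Ioo_mem_nhdsGT_of_mem (show (0:ℝ) ∈ Ico (0:ℝ) 1 from ⟨le_refl 0, one_pos⟩)]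
    with h hh
  obtain ⟨h0, h1⟩ := hh
  dsimp only
  have hp : (0:ℝ) < h ^ (2*H) := Real.rpow_pos_of_pos h0 _
  have e₀ : |(1:ℝ) - 1| ^ (2*H) = 0 := by
    rw [sub_self, abs_zero, Real.zero_rpow (by positivity)]
  have e₁ : |1 - h - 1| ^ (2*H) = h ^ (2*H) := by
    rw [show (1 - h - 1 : ℝ) = -h by ring, abs_neg, abs_of_pos h0]
  have e₂ : |1 - h - (1+h)| ^ (2*H) = 2*(c₀+1) * h ^ (2*H) := by
    rw [show (1 - h - (1+h) : ℝ) = -(2*h) by ring, abs_neg, abs_of_pos (by linarith),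
      Real.mul_rpow (by norm_num) h0.le,
      show (2:ℝ) ^ (2*H) = 2*(c₀+1) by
        rw [show (2*H) = 1 + (2*H-1) by ring, Real.rpow_add (by norm_num : (0:ℝ) < 2),
          Real.rpow_one, hc₀def]; ring]
  have e₃ : |1 - (1+h)| ^ (2*H) = h ^ (2*H) := by
    rw [show (1 - (1+h) : ℝ) = -h by ring, abs_neg, abs_of_pos h0]
  have e₄ : |1 + h - (1+h)| ^ (2*H) = 0 := by
    rw [show (1 + h - (1+h) : ℝ) = 0 by ring, abs_zero, Real.zero_rpow (by positivity)]
  have e₅ : (1:ℝ) ^ (2*H) = 1 := Real.one_rpow _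
  rw [e₀, e₁, e₂, e₃, e₄, e₅]
  have hr2 : h ^ ((2:ℝ)) = h ^ (2:ℕ) := by
    rw [show ((2:ℝ)) = ((2:ℕ):ℝ) by norm_num, Real.rpow_natCast]
  have r1 : h ^ (2*H-1) = h ^ (2*H) / h := by
    rw [Real.rpow_sub h0, Real.rpow_one]
  have r2 : h ^ (2-2*H) = h ^ (2:ℕ) / h ^ (2*H) := by
    rw [Real.rpow_sub h0, hr2]
  have r3 : h ^ (2*H-2) = h ^ (2*H) / h ^ (2:ℕ) := by
    rw [Real.rpow_sub h0, hr2]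
  rw [r1, r2, r3]
  set p := h ^ (2*H) with hpdef
  set a := (1+h) ^ (2*H) with hadef
  set b := (1-h) ^ (2*H) with hbdef
  have hdp : (1 - ((a - 1)/h - p/h)^2 * (h ^ (2:ℕ) / p)/4)
      = ((1 + 1 - 0)/2 * ((a + a - 0)/2) - ((1 + a - p)/2)^2)/p := by
    field_simp
    ring
  rw [hdp, inv_div]
  have hsplit : p/((1 + 1 - 0)/2 * ((a + a - 0)/2) - ((1 + a - p)/2)^2) * (p/h^2)
      = p*p/((((1 + 1 - 0)/2 * ((a + a - 0)/2) - ((1 + a - p)/2)^2))*h^2) :=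
    div_mul_div_comm _ _ _ _
  rw [hsplit, ← mul_div_assoc]
  congr 1
  field_simp
  ring
end

section
/- Let H ∈ (1/2, 1). Then d(h)/h^{2H} → 1 as h → 0 from the right, where d(h) = (1+h)^{2H} − (((1+h)^{2H} + 1 − h^{2H})/2)². -/
open Filter Set
open scoped Topology

/-! With `a = (1 + h) ^ p` and `p = 2H`, expanding the square gives
`d(h) = h ^ p (a + 1) / 2 - (a - 1) ^ 2 / 4 - h ^ (2p) / 4`. Since `(a - 1) / h → p` is bounded,
`(a - 1) ^ 2 / h ^ p = ((a - 1) / h) ^ 2 h ^ (2 - p) → 0` because `p < 2`, and `h ^ p → 0` because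
`p > 0`; so `d(h) / h ^ p` has the limit of `(a + 1) / 2`, namely `1`. -/

lemma tendsto_rpow_nhdsGT_zero {p : ℝ} (hp : 0 < p) :
    Tendsto (fun h : ℝ => h ^ p) (𝓝[>] 0) (𝓝 0) := by
  have := (Real.continuousAt_rpow_const 0 p (Or.inr hp.le)).tendsto
  rw [Real.zero_rpow hp.ne'] at this
  exact tendsto_nhdsWithin_of_tendsto_nhds this

lemma tendsto_one_add_rpow_sub_one_div (p : ℝ) :
    Tendsto (fun h : ℝ => ((1 + h) ^ p - 1) / h) (𝓝[≠] 0) (𝓝 p) := by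
  have hderiv : HasDerivAt (fun x : ℝ => x ^ p) p 1 := by
    simpa using Real.hasDerivAt_rpow_const (x := 1) (p := p) (Or.inl one_ne_zero)
  refine (hasDerivAt_iff_tendsto_slope_zero.mp hderiv).congr fun h => ?_
  simp [div_eq_inv_mul]

lemma tendsto_one_add_rpow_nhds_zero (p : ℝ) :
    Tendsto (fun h : ℝ => (1 + h) ^ p) (𝓝 0) (𝓝 1) := by
  have : ContinuousAt (fun h : ℝ => (1 + h) ^ p) 0 := by fun_prop (disch := norm_num)
  simpa using this.tendsto

lemma one_add_rpow_det_div_rpow_eq {h : ℝ} (hh : 0 < h) (p : ℝ) :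
    ((1 + h) ^ p - (((1 + h) ^ p + 1 - h ^ p) / 2) ^ 2) / h ^ p =
      ((1 + h) ^ p + 1) / 2 - (((1 + h) ^ p - 1) / h) ^ 2 * h ^ (2 - p) / 4 - h ^ p / 4 := by
  have hpow : h ^ (2 - p) * h ^ p = h ^ 2 := by
    rw [← Real.rpow_add hh, sub_add_cancel, Real.rpow_two]
  have : h ^ p ≠ 0 := by positivity
  field_simp
  linear_combination 4 * ((1 + h) ^ p - 1) ^ 2 * hpow

theorem fbm_determinant_asymptotics (H : ℝ) (hH : H ∈ Set.Ioo (1/2 : ℝ) 1) :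
    Filter.Tendsto (fun h : ℝ =>
      ((1 + h) ^ (2*H) - (((1 + h) ^ (2*H) + 1 - h ^ (2*H)) / 2) ^ 2) / h ^ (2*H))
      (𝓝[>] 0) (𝓝 1) := by
  obtain ⟨hH₀, hH₁⟩ := hH
  have hmean : Tendsto (fun h : ℝ => ((1 + h) ^ (2*H) + 1) / 2) (𝓝[>] 0) (𝓝 1) := by
    simpa using (((tendsto_one_add_rpow_nhds_zero (2*H)).add_const 1).div_const 2).mono_left
      nhdsWithin_le_nhds
  have hslope := (tendsto_one_add_rpow_sub_one_div (2*H)).mono_left (nhdsGT_le_nhdsNE 0)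
  have hcross :=
    ((hslope.pow 2).mul (tendsto_rpow_nhdsGT_zero (p := 2 - 2*H) (by linarith))).div_const 4
  have hsquare := (tendsto_rpow_nhdsGT_zero (p := 2*H) (by linarith)).div_const 4
  have hlim := (hmean.sub hcross).sub hsquare
  rw [mul_zero, zero_div, sub_zero, sub_zero] at hlim
  refine hlim.congr' ?_
  filter_upwards [self_mem_nhdsWithin] with h hh using (one_add_rpow_det_div_rpow_eq hh _).symm
end

section
/- Let H ∈ (1/2, 1), T > 0, t ∈ (0,T), and let B = (B_s)_{s ∈ [0,T]} be a process of square-integrable real random variables such that every finite family (B_{s₁},…,B_{sₙ}) has a centered jointly Gaussian law with E[B_s B_u] = R_H(s,u). Then Var(E[(B_t − B_{t−h})/h | σ(B_t, B_{t+h})]) tends to +∞ as h → 0 from the right. -/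
/-!
`Z = B (t + h) - B t` is measurable for `σ(B t, B (t + h))`, so by Cauchy–Schwarz the variance of
`E[X | σ(B t, B (t + h))]`, with `X = (B t - B (t - h)) / h`, is at least `cov[X, Z]² / Var[Z]`.
For fractional Brownian motion `cov[B t - B (t - h), Z] = (2 ^ (2H) - 2) / 2 · h ^ (2H)` and
`Var[Z] = h ^ (2H)`, which gives the lower bound `((2 ^ (2H) - 2) / 2)² · h ^ (2H - 2)`. Its
constant is positive because `H > 1/2`, and it blows up as `h ↓ 0` because `H < 1`.
-/

open MeasureTheory ProbabilityTheory Filter Set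
open scoped Topology NNReal

noncomputable section

/-- A measure on a real normed space is a centered Gaussian measure if every continuous
linear functional pushes it forward to a centered one-dimensional Gaussian measure. -/
def IsCenteredGaussian {E : Type*} [NormedAddCommGroup E] [NormedSpace ℝ E]
    [MeasurableSpace E] (μ : MeasureTheory.Measure E) : Prop :=
  ∀ L : E →L[ℝ] ℝ, ∃ v : ℝ≥0, μ.map L = ProbabilityTheory.gaussianReal 0 v

section Covariance

variable {Ω : Type*} {mΩ : MeasurableSpace Ω} {μ : Measure Ω} {X Y : Ω → ℝ}

lemma covariance_sq_le_variance_mul_variance [IsFiniteMeasure μ] (hX : MemLp X 2 μ)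
    (hY : MemLp Y 2 μ) : cov[X, Y; μ] ^ 2 ≤ Var[X; μ] * Var[Y; μ] := by
  have h := discrim_le_zero (a := Var[Y; μ]) (b := 2 * cov[X, Y; μ]) (c := Var[X; μ])
    fun x ↦ by
      have := variance_nonneg (X + x • Y) μ
      rw [variance_add hX (hY.const_smul x), variance_smul, covariance_smul_right] at this
      linarith
  rw [discrim] at h
  linarith

lemma covariance_condExp_left [IsProbabilityMeasure μ] {m : MeasurableSpace Ω} (hm : m ≤ mΩ)
    (hX : MemLp X 2 μ) (hY : MemLp Y 2 μ) (hYm : StronglyMeasurable[m] Y) :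
    cov[μ[X|m], Y; μ] = cov[X, Y; μ] := by
  have hXY : Integrable (X * Y) μ := hX.integrable_mul hY
  rw [covariance_eq_sub (hX.condExp one_le_two) hY, covariance_eq_sub hX hY,
    integral_condExp hm, ← integral_congr_ae (condExp_mul_of_stronglyMeasurable_right hYm hXY
    (hX.integrable one_le_two)), integral_condExp hm]

/-- `cov[X, Y]² / Var[Y]` is the variance of the best linear predictor of `X` from `Y`;
when `Y` is `m`-measurable, `μ[X|m]` is an even better one. -/
lemma sq_covariance_div_variance_le_variance_condExp [IsProbabilityMeasure μ]
    {m : MeasurableSpace Ω} (hm : m ≤ mΩ) (hX : MemLp X 2 μ) (hY : MemLp Y 2 μ)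
    (hYm : StronglyMeasurable[m] Y) :
    cov[X, Y; μ] ^ 2 / Var[Y; μ] ≤ Var[μ[X|m]; μ] := by
  rw [← covariance_condExp_left hm hX hY hYm]
  rcases (variance_nonneg Y μ).eq_or_lt with hY0 | hYpos
  · rw [← hY0, div_zero]
    exact variance_nonneg _ _
  · exact div_le_of_le_mul₀ hYpos.le (variance_nonneg _ _)
      (covariance_sq_le_variance_mul_variance (hX.condExp one_le_two) hY)

end Covariance

lemma integral_clm_comp_eq_zero_of_isCenteredGaussian {Ω E : Type*} [MeasurableSpace Ω]
    {P : Measure Ω} [NormedAddCommGroup E] [NormedSpace ℝ E] [MeasurableSpace E]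
    [OpensMeasurableSpace E] {Y : Ω → E} (hY : Measurable Y)
    (hG : IsCenteredGaussian (P.map Y)) (L : E →L[ℝ] ℝ) : ∫ ω, L (Y ω) ∂P = 0 := by
  obtain ⟨v, hv⟩ := hG L
  calc ∫ ω, L (Y ω) ∂P = ∫ x, x ∂(P.map (L ∘ Y)) :=
        (integral_map (L.measurable.comp hY).aemeasurable aestronglyMeasurable_id).symm
    _ = 0 := by rw [← Measure.map_map L.measurable hY, hv, integral_id_gaussianReal]

def fbmCovariance (H s u : ℝ) : ℝ := (s ^ (2 * H) + u ^ (2 * H) - |s - u| ^ (2 * H)) / 2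

section FractionalBrownianMotion

variable {Ω : Type*} [MeasurableSpace Ω] {P : Measure Ω} [IsProbabilityMeasure P]
  {B : ℝ → Ω → ℝ} {H : ℝ} {S : Set ℝ}

lemma fbmCovariance_increments (hB2 : ∀ s ∈ S, MemLp (B s) 2 P)
    (hR : ∀ s ∈ S, ∀ u ∈ S, cov[B s, B u; P] = fbmCovariance H s u) {a b c d : ℝ}
    (ha : a ∈ S) (hb : b ∈ S) (hc : c ∈ S) (hd : d ∈ S) :
    cov[fun ω ↦ B b ω - B a ω, fun ω ↦ B d ω - B c ω; P] =
      (|b - c| ^ (2 * H) + |a - d| ^ (2 * H) - |b - d| ^ (2 * H) - |a - c| ^ (2 * H)) / 2 := by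
  rw [covariance_fun_sub_fun_sub (hB2 b hb) (hB2 a ha) (hB2 d hd) (hB2 c hc), hR b hb d hd,
    hR b hb c hc, hR a ha d hd, hR a ha c hc]
  unfold fbmCovariance
  ring

lemma le_variance_condExp_diffQuot (hH : 0 < H) (hBm : ∀ s, Measurable (B s))
    (hB2 : ∀ s ∈ S, MemLp (B s) 2 P)
    (hR : ∀ s ∈ S, ∀ u ∈ S, cov[B s, B u; P] = fbmCovariance H s u) {t h : ℝ} (hh : 0 < h)
    (hl : t - h ∈ S) (ht : t ∈ S) (hr : t + h ∈ S) :
    ((2 ^ (2 * H) - 2) / 2) ^ 2 * h ^ (2 * H - 2) ≤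
      Var[P[fun ω ↦ (B t ω - B (t - h) ω) / h |
        MeasurableSpace.comap (fun ω ↦ (B t ω, B (t + h) ω)) inferInstance]; P] := by
  have hm : MeasurableSpace.comap (fun ω ↦ (B t ω, B (t + h) ω)) inferInstance ≤ ‹_› :=
    ((hBm t).prodMk (hBm (t + h))).comap_le
  have hZm : StronglyMeasurable[MeasurableSpace.comap (fun ω ↦ (B t ω, B (t + h) ω))
      inferInstance] (fun ω ↦ B (t + h) ω - B t ω) :=
    ((measurable_snd.sub measurable_fst).comp (comap_measurable _)).stronglyMeasurable
  have hX : MemLp (fun ω ↦ (B t ω - B (t - h) ω) / h) 2 P := by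
    simpa only [div_eq_mul_inv, Pi.sub_apply] using ((hB2 t ht).sub (hB2 _ hl)).mul_const h⁻¹
  have hZ : MemLp (fun ω ↦ B (t + h) ω - B t ω) 2 P := (hB2 _ hr).sub (hB2 t ht)
  have h2H : 2 * H ≠ 0 := by positivity
  have hcovXZ : cov[fun ω ↦ B t ω - B (t - h) ω, fun ω ↦ B (t + h) ω - B t ω; P] =
      (2 ^ (2 * H) - 2) / 2 * h ^ (2 * H) := by
    rw [fbmCovariance_increments hB2 hR hl ht ht hr, sub_self, abs_zero, Real.zero_rpow h2H,
      show t - h - (t + h) = -(2 * h) by ring, show t - (t + h) = -h by ring,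
      show t - h - t = -h by ring, abs_neg, abs_neg, abs_of_pos hh, abs_of_pos (by positivity),
      Real.mul_rpow zero_le_two hh.le]
    ring
  have hvarZ : Var[fun ω ↦ B (t + h) ω - B t ω; P] = h ^ (2 * H) := by
    rw [← covariance_self hZ.aemeasurable,
      fbmCovariance_increments hB2 hR ht hr ht hr, sub_self, sub_self, abs_zero, Real.zero_rpow h2H,
      show t + h - t = h by ring, show t - (t + h) = -h by ring, abs_neg, abs_of_pos hh]
    ring
  have key := sq_covariance_div_variance_le_variance_condExp hm hX hZ hZm
  rw [covariance_fun_div_left, hcovXZ, hvarZ] at key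
  convert key using 1
  rw [Real.rpow_sub hh, Real.rpow_two]
  field_simp

end FractionalBrownianMotion

theorem fbm_two_point_regression_variance_diverges_general
    {Ω : Type*} [MeasurableSpace Ω] (P : Measure Ω) [IsProbabilityMeasure P]
    (H T : ℝ) (hH : H ∈ Set.Ioo (1/2 : ℝ) 1) (t : ℝ) (ht : t ∈ Set.Ioo 0 T)
    (B : ℝ → Ω → ℝ) (hBm : ∀ s, Measurable (B s))
    (hB2 : ∀ s ∈ Set.Icc 0 T, MemLp (B s) 2 P)
    (hG : ∀ (n : ℕ) (s : Fin n → ℝ), (∀ i, s i ∈ Set.Icc 0 T) →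
      IsCenteredGaussian (P.map (fun ω => fun i => B (s i) ω)))
    (hcov : ∀ s ∈ Set.Icc 0 T, ∀ u ∈ Set.Icc 0 T,
      ∫ ω, B s ω * B u ω ∂P = (s ^ (2*H) + u ^ (2*H) - |s - u| ^ (2*H)) / 2) :
    Filter.Tendsto
      (fun h : ℝ => variance
        (P[fun ω => (B t ω - B (t - h) ω) / h |
          MeasurableSpace.comap (fun ω => (B t ω, B (t + h) ω)) inferInstance]) P)
      (𝓝[>] 0) Filter.atTop := by
  obtain ⟨hH1, hH2⟩ := hH
  obtain ⟨ht0, htT⟩ := ht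
  have hmean : ∀ s ∈ Icc 0 T, ∫ ω, B s ω ∂P = 0 := fun s hs ↦
    integral_clm_comp_eq_zero_of_isCenteredGaussian (measurable_pi_lambda _ fun _ ↦ hBm s)
      (hG 1 _ fun _ ↦ hs) (ContinuousLinearMap.proj 0)
  have hR : ∀ s ∈ Icc 0 T, ∀ u ∈ Icc 0 T, cov[B s, B u; P] = fbmCovariance H s u :=
    fun s hs u hu ↦ by
      rw [covariance_eq_sub (hB2 s hs) (hB2 u hu), hmean s hs, zero_mul, sub_zero]
      exact hcov s hs u hu
  have hc : 0 < ((2 : ℝ) ^ (2 * H) - 2) / 2 := by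
    have := Real.rpow_lt_rpow_of_exponent_lt (one_lt_two : (1 : ℝ) < 2)
      (by linarith : (1 : ℝ) < 2 * H)
    rw [Real.rpow_one] at this
    linarith
  have hlim := (tendsto_rpow_neg_nhdsGT_zero (by linarith : 2 * H - 2 < 0)).const_mul_atTop
    (pow_pos hc 2)
  refine tendsto_atTop_mono' _ ?_ hlim
  filter_upwards [Ioo_mem_nhdsGT (lt_min ht0 (sub_pos.2 htT))] with h ⟨hh0, hh⟩
  exact le_variance_condExp_diffQuot (by linarith) hBm hB2 hR hh0
    ⟨by linarith [min_le_left t (T - t)], by linarith⟩ ⟨ht0.le, htT.le⟩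
    ⟨by linarith, by linarith [min_le_right t (T - t)]⟩

/-- The main quantitative step in the proof of Proposition 13: for fractional Brownian
motion with `H > 1/2`, `Var(E[(B_t - B_{t-h})/h | σ(B_t, B_{t+h})]) → +∞` as `h ↓ 0`. -/
theorem fbm_two_point_regression_variance_diverges
    {Ω : Type*} [MeasurableSpace Ω] (P : Measure Ω) [IsProbabilityMeasure P]
    (H T : ℝ) (hH : H ∈ Set.Ioo (1/2 : ℝ) 1) (hT : 0 < T) (t : ℝ) (ht : t ∈ Set.Ioo 0 T)
    (B : ℝ → Ω → ℝ) (hBm : ∀ s, Measurable (B s))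
    (hB2 : ∀ s ∈ Set.Icc 0 T, MemLp (B s) 2 P)
    (hG : ∀ (n : ℕ) (s : Fin n → ℝ), (∀ i, s i ∈ Set.Icc 0 T) →
      IsCenteredGaussian (P.map (fun ω => fun i => B (s i) ω)))
    (hcov : ∀ s ∈ Set.Icc 0 T, ∀ u ∈ Set.Icc 0 T,
      ∫ ω, B s ω * B u ω ∂P = (s ^ (2*H) + u ^ (2*H) - |s - u| ^ (2*H)) / 2) :
    Filter.Tendsto
      (fun h : ℝ => variance
        (P[fun ω => (B t ω - B (t - h) ω) / h |
          MeasurableSpace.comap (fun ω => (B t ω, B (t + h) ω)) inferInstance]) P)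
      (𝓝[>] 0) Filter.atTop :=
  fbm_two_point_regression_variance_diverges_general P H T hH t ht B hBm hB2 hG hcov
end
end

section
/- Let H ∈ (1/2, 1), T > 0, and let f : [0,T] → ℝ be measurable with ∫₀ᵀ |f(u)|^{1/H} du < ∞. Then ∫₀ᵀ ∫₀ᵀ |f(u)| |f(v)| |u − v|^{2H−2} du dv < ∞. -/
/-!
Split `(0, T]` into the sets `E k` on which `|f| ≈ 2 ^ k`, of measures `a k`. Cutting a set `A` at
distance `|A|` from `u` shows `∫_A |u - v| ^ (2H - 2) dv ≲ |A| ^ (2H - 1)`, so the interaction of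
`E j` and `E k` is `≲ min (a j ^ (2H - 1) * a k) (a k ^ (2H - 1) * a j)`. With
`b k = 2 ^ (k / H) * a k`, whose sum is controlled by `∫ |f| ^ (1/H)`, the weighted interaction
`2 ^ (j + k)` times this is `≲ (∑ b) ^ (2H - 1) * 2 ^ (-(1/H - 1) |j - k|) * b (max j k)`, and the
geometric decay in `|j - k|` makes the double sum finite. This is the layer-cake proof of the
Hardy–Littlewood–Sobolev inequality at the critical exponent `2 H + (2 - 2 H) = 2`.
-/

open MeasureTheory Set Function
open scoped ENNReal

section SingularKernel

variable {β : ℝ}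

theorem lintegral_Ioc_rpow (hβ : -1 < β) {r : ℝ} (hr : 0 ≤ r) :
    ∫⁻ w in Ioc 0 r, ENNReal.ofReal (w ^ β) = ENNReal.ofReal (r ^ (β + 1) / (β + 1)) := by
  have hint : IntegrableOn (fun w : ℝ => w ^ β) (Ioc 0 r) := by
    simpa [intervalIntegrable_iff, uIoc_of_le hr] using
      intervalIntegral.intervalIntegrable_rpow' (a := 0) (b := r) hβ
  rw [← ofReal_integral_eq_lintegral_ofReal hint
    ((ae_restrict_iff' measurableSet_Ioc).2 (.of_forall fun w hw => Real.rpow_nonneg hw.1.le β)),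
    ← intervalIntegral.integral_of_le hr, integral_rpow (.inl hβ),
    Real.zero_rpow (by linarith), sub_zero]

theorem setLIntegral_abs_sub_rpow_le (hβ₁ : -1 < β) (hβ₀ : β < 0) (u : ℝ) (A : Set ℝ) {r : ℝ}
    (hr : 0 < r) :
    ∫⁻ v in A, ENNReal.ofReal (|u - v| ^ β) ≤
      2 * ENNReal.ofReal (r ^ (β + 1) / (β + 1)) + ENNReal.ofReal (r ^ β) * volume A := by
  set g : ℝ → ℝ≥0∞ := (Ioc 0 r).indicator fun w => ENNReal.ofReal (w ^ β)
  have hg : Measurable g := by fun_prop (disch := exact measurableSet_Ioc)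
  have hpointwise :
      ∀ v, ENNReal.ofReal (|u - v| ^ β) ≤ g (u - v) + g (v - u) + ENNReal.ofReal (r ^ β) := by
    intro v
    rcases le_or_gt |u - v| r with hnear | hfar
    · rcases lt_trichotomy v u with h | rfl | h
      · have hmem : u - v ∈ Ioc 0 r := ⟨sub_pos.2 h, (le_abs_self _).trans hnear⟩
        have : g (u - v) = ENNReal.ofReal (|u - v| ^ β) := by
          simp [g, indicator_of_mem hmem, abs_of_pos hmem.1]
        exact le_add_right (le_add_right this.ge)
      · simp [Real.zero_rpow hβ₀.ne]
      · have hmem : v - u ∈ Ioc 0 r := ⟨sub_pos.2 h, by linarith [(abs_le.1 hnear).1]⟩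
        have : g (v - u) = ENNReal.ofReal (|u - v| ^ β) := by
          simp [g, indicator_of_mem hmem, abs_sub_comm u v, abs_of_pos hmem.1]
        exact le_add_right (le_add_left this.ge)
    · exact le_add_left (ENNReal.ofReal_le_ofReal (Real.rpow_le_rpow_of_nonpos hr hfar.le hβ₀.le))
  calc ∫⁻ v in A, ENNReal.ofReal (|u - v| ^ β)
      ≤ ∫⁻ v in A, (g (u - v) + g (v - u) + ENNReal.ofReal (r ^ β)) := lintegral_mono hpointwise
    _ = (∫⁻ v in A, g (u - v)) + (∫⁻ v in A, g (v - u)) + ENNReal.ofReal (r ^ β) * volume A := by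
      rw [lintegral_add_right _ measurable_const, lintegral_add_right _ (by fun_prop),
        setLIntegral_const]
    _ ≤ (∫⁻ v, g (u - v)) + (∫⁻ v, g (v - u)) + ENNReal.ofReal (r ^ β) * volume A := by
      gcongr <;> exact Measure.restrict_le_self
    _ = 2 * ENNReal.ofReal (r ^ (β + 1) / (β + 1)) + ENNReal.ofReal (r ^ β) * volume A := by
      rw [lintegral_sub_left_eq_self, lintegral_sub_right_eq_self, ← two_mul,
        lintegral_indicator measurableSet_Ioc, lintegral_Ioc_rpow hβ₁ hr.le]

theorem setLIntegral_abs_sub_rpow_le_volume_rpow (hβ₁ : -1 < β) (hβ₀ : β < 0) (u : ℝ)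
    (A : Set ℝ) :
    ∫⁻ v in A, ENNReal.ofReal (|u - v| ^ β) ≤
      ENNReal.ofReal (2 / (β + 1) + 1) * volume A ^ (β + 1) := by
  have hθ : 0 < β + 1 := by linarith
  rcases eq_top_or_lt_top (volume A) with htop | hfin
  · rw [htop, ENNReal.top_rpow_of_pos hθ, ENNReal.mul_top (by simp; positivity)]
    exact le_top
  rcases eq_zero_or_pos (volume A) with hzero | hpos
  · simp [Measure.restrict_eq_zero.2 hzero]
  set r := (volume A).toReal
  have hr : 0 < r := ENNReal.toReal_pos hpos.ne' hfin.ne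
  have hA : volume A = ENNReal.ofReal r := (ENNReal.ofReal_toReal hfin.ne).symm
  refine (setLIntegral_abs_sub_rpow_le hβ₁ hβ₀ u A hr).trans_eq ?_
  rw [hA, ENNReal.ofReal_rpow_of_pos hr, ← ENNReal.ofReal_ofNat 2,
    ← ENNReal.ofReal_mul (by norm_num), ← ENNReal.ofReal_mul (by positivity), ← ENNReal.ofReal_add (by positivity) (by positivity),
    ← ENNReal.ofReal_mul (by positivity), Real.rpow_add hr, Real.rpow_one]
  congr 1
  field_simp

theorem lintegral_lintegral_abs_sub_rpow_le (hβ₁ : -1 < β) (hβ₀ : β < 0) (A B : Set ℝ) :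
    ∫⁻ u in A, ∫⁻ v in B, ENNReal.ofReal (|u - v| ^ β) ≤
      ENNReal.ofReal (2 / (β + 1) + 1) * (volume B ^ (β + 1) * volume A) :=
  calc ∫⁻ u in A, ∫⁻ v in B, ENNReal.ofReal (|u - v| ^ β)
      ≤ ∫⁻ _ in A, ENNReal.ofReal (2 / (β + 1) + 1) * volume B ^ (β + 1) :=
        lintegral_mono fun u => setLIntegral_abs_sub_rpow_le_volume_rpow hβ₁ hβ₀ u B
    _ = _ := by rw [setLIntegral_const, mul_assoc]

theorem lintegral_lintegral_abs_sub_rpow_comm (A B : Set ℝ) :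
    ∫⁻ u in A, ∫⁻ v in B, ENNReal.ofReal (|u - v| ^ β) =
      ∫⁻ u in B, ∫⁻ v in A, ENNReal.ofReal (|u - v| ^ β) := by
  rw [lintegral_lintegral_swap (by fun_prop)]
  simp_rw [abs_sub_comm]

end SingularKernel

section DyadicSums

theorem tsum_pow_dist_le {r : ℝ≥0∞} (hr : r ≤ 1) (j : ℕ) :
    ∑' k, r ^ Nat.dist j k ≤ 2 * (1 - r)⁻¹ := by
  rw [← Summable.sum_add_tsum_nat_add' (k := j) ENNReal.summable, two_mul,
    ← ENNReal.tsum_geometric]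
  refine add_le_add ?_ (tsum_congr fun m => ?_).le
  · calc ∑ k ∈ Finset.range j, r ^ Nat.dist j k
        ≤ ∑ k ∈ Finset.range j, r ^ (j - 1 - k) := by
          refine Finset.sum_le_sum fun k hk => pow_le_pow_right_of_le_one' hr ?_
          rw [Nat.dist_eq_sub_of_le_right (Finset.mem_range.1 hk).le]
          omega
      _ = ∑ k ∈ Finset.range j, r ^ k := Finset.sum_range_reflect (r ^ ·) j
      _ ≤ ∑' k, r ^ k := ENNReal.sum_le_tsum _
  · rw [Nat.dist_eq_sub_of_le (Nat.le_add_left j m), Nat.add_sub_cancel]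

theorem tsum_tsum_pow_dist_mul_add_le {r : ℝ≥0∞} (hr : r ≤ 1) (c : ℕ → ℝ≥0∞) :
    ∑' j, ∑' k, r ^ Nat.dist j k * (c j + c k) ≤ 4 * (1 - r)⁻¹ * ∑' k, c k := by
  have hrow : ∑' j, ∑' k, r ^ Nat.dist j k * c j ≤ 2 * (1 - r)⁻¹ * ∑' k, c k := by
    simp_rw [ENNReal.tsum_mul_right, ← ENNReal.tsum_mul_left]
    exact ENNReal.tsum_le_tsum fun j => by gcongr; exact tsum_pow_dist_le hr j
  calc ∑' j, ∑' k, r ^ Nat.dist j k * (c j + c k)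
      = ∑' j, ∑' k, r ^ Nat.dist j k * c j + ∑' j, ∑' k, r ^ Nat.dist j k * c k := by
        simp_rw [mul_add, ENNReal.tsum_add]
    _ = ∑' j, ∑' k, r ^ Nat.dist j k * c j + ∑' j, ∑' k, r ^ Nat.dist j k * c j := by
        rw [ENNReal.tsum_comm (f := fun j k => r ^ Nat.dist j k * c k)]
        simp_rw [Nat.dist_comm]
    _ ≤ 4 * (1 - r)⁻¹ * ∑' k, c k := by
        rw [show (4 : ℝ≥0∞) = 2 + 2 by norm_num, add_mul, add_mul]
        gcongr

/-- The exact balance `p * (1 + θ) = 2` is what turns the product of the two dyadic heights into a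
geometric factor in the gap `k - j`. -/
theorem two_pow_mul_two_pow_mul_rpow_mul_eq {p θ : ℝ} (hθ : 0 ≤ θ) (hpθ : p * (1 + θ) = 2)
    {j k : ℕ} (hjk : j ≤ k) (x y : ℝ≥0∞) :
    2 ^ j * 2 ^ k * (x ^ θ * y) =
      ((2 : ℝ≥0∞) ^ (1 - p)) ^ (k - j) * ((2 ^ (j * p) * x) ^ θ * (2 ^ (k * p) * y)) := by
  have hexp : (2 : ℝ≥0∞) ^ (j : ℝ) * 2 ^ (k : ℝ) =
      2 ^ ((1 - p) * (k - j : ℝ)) * 2 ^ (j * p * θ) * 2 ^ (k * p) := by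
    simp only [← ENNReal.rpow_add _ _ two_ne_zero ENNReal.ofNat_ne_top]
    congr 1
    linear_combination -(j : ℝ) * hpθ
  rw [ENNReal.mul_rpow_of_nonneg _ _ hθ, ← ENNReal.rpow_mul]
  simp only [← ENNReal.rpow_natCast, ← ENNReal.rpow_mul, Nat.cast_sub hjk, hexp]
  ring

/-- Discrete form of the Hardy–Littlewood–Sobolev inequality: `a k` plays the measure of the set
where `|f| ≈ 2 ^ k`, so the hypothesis `ha` is the finiteness of `∫ |f| ^ p`. -/
theorem tsum_two_pow_mul_tsum_two_pow_mul_ne_top {p θ : ℝ} (hθ : 0 ≤ θ) (hp : 1 < p)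
    (hpθ : p * (1 + θ) = 2) {a : ℕ → ℝ≥0∞} (ha : ∑' k : ℕ, (2 : ℝ≥0∞) ^ (k * p) * a k ≠ ⊤)
    {C : ℝ≥0∞} (hC : C ≠ ⊤) {x : ℕ → ℕ → ℝ≥0∞} (hsymm : ∀ j k, x j k = x k j)
    (hx : ∀ j k, x j k ≤ C * (a k ^ θ * a j)) :
    ∑' j, 2 ^ j * ∑' k, 2 ^ k * x j k ≠ ⊤ := by
  set b : ℕ → ℝ≥0∞ := fun k => 2 ^ (k * p) * a k
  set B := ∑' k, b k
  set r : ℝ≥0∞ := 2 ^ (1 - p)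
  have hr : r < 1 := ENNReal.rpow_lt_one_of_one_lt_of_neg (by norm_num) (by linarith)
  have hterm : ∀ j k, 2 ^ j * (2 ^ k * x j k) ≤ C * B ^ θ * (r ^ Nat.dist j k * (b j + b k)) := by
    intro j k
    wlog hjk : j ≤ k generalizing j k
    · rw [hsymm, mul_left_comm, Nat.dist_comm, add_comm]
      exact this k j (le_of_not_ge hjk)
    calc 2 ^ j * (2 ^ k * x j k) ≤ 2 ^ j * (2 ^ k * (C * (a j ^ θ * a k))) := by
          rw [hsymm]; gcongr 2 ^ j * (2 ^ k * ?_); exact hx k j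
      _ = C * (r ^ (k - j) * (b j ^ θ * b k)) := by
          rw [← two_pow_mul_two_pow_mul_rpow_mul_eq hθ hpθ hjk]; ring
      _ ≤ C * (r ^ (k - j) * (B ^ θ * b k)) := by
          gcongr; exact ENNReal.le_tsum j
      _ ≤ C * B ^ θ * (r ^ Nat.dist j k * (b j + b k)) := by
          rw [Nat.dist_eq_sub_of_le hjk, mul_assoc C]
          gcongr C * ?_
          rw [mul_left_comm]
          gcongr
          exact le_add_self
  refine ne_top_of_le_ne_top ?_ (calc
    ∑' j, 2 ^ j * ∑' k, 2 ^ k * x j k = ∑' j, ∑' k, 2 ^ j * (2 ^ k * x j k) := by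
        simp_rw [ENNReal.tsum_mul_left]
    _ ≤ ∑' j, ∑' k, C * B ^ θ * (r ^ Nat.dist j k * (b j + b k)) :=
        ENNReal.tsum_le_tsum fun j => ENNReal.tsum_le_tsum fun k => hterm j k
    _ ≤ C * B ^ θ * (4 * (1 - r)⁻¹ * B) := by
        simp_rw [ENNReal.tsum_mul_left]
        gcongr
        exact tsum_tsum_pow_dist_mul_add_le hr.le b)
  have hB : B ^ θ ≠ ⊤ := ENNReal.rpow_ne_top_of_nonneg hθ ha
  have : (1 - r)⁻¹ ≠ ⊤ := ENNReal.inv_ne_top.2 (tsub_pos_of_lt hr).ne'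
  finiteness

end DyadicSums

section DyadicLevelSets

variable {α : Type*} {f : α → ℝ}

/-- Shifting `|f|` to `1 + |f| ≥ 1` lets levels indexed by `ℕ` cover the whole space, zeros of `f`
included. -/
def dyadicLevelSet (f : α → ℝ) (k : ℕ) : Set α :=
  (fun x => 1 + |f x|) ⁻¹' Ico (2 ^ k) (2 ^ (k + 1))

theorem pairwise_disjoint_dyadicLevelSet (f : α → ℝ) :
    Pairwise (Disjoint on dyadicLevelSet f) := fun _ _ hjk =>
  ((pow_right_mono₀ (one_le_two : (1 : ℝ) ≤ 2)).pairwise_disjoint_on_Ico_succ hjk).preimage _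

theorem iUnion_dyadicLevelSet (f : α → ℝ) : ⋃ k, dyadicLevelSet f k = univ :=
  eq_univ_of_forall fun x => mem_iUnion.2 <|
    exists_nat_pow_near (le_add_of_nonneg_right (abs_nonneg (f x))) one_lt_two

theorem two_pow_le_of_mem_dyadicLevelSet {x : α} {k : ℕ} (hx : x ∈ dyadicLevelSet f k) :
    (2 : ℝ) ^ k ≤ 1 + |f x| :=
  hx.1

theorem ofReal_abs_le_of_mem_dyadicLevelSet {x : α} {k : ℕ} (hx : x ∈ dyadicLevelSet f k) :
    ENNReal.ofReal |f x| ≤ 2 * 2 ^ k := by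
  rw [← pow_succ', ← ENNReal.ofReal_ofNat 2, ← ENNReal.ofReal_pow zero_le_two]
  exact ENNReal.ofReal_le_ofReal (by linarith [hx.2])

variable [MeasurableSpace α] {μ : Measure α} {S : Set α}

theorem measurableSet_dyadicLevelSet (hf : Measurable f) (k : ℕ) :
    MeasurableSet (dyadicLevelSet f k) :=
  (measurable_const.add hf.abs) measurableSet_Ico

theorem setLIntegral_eq_tsum_dyadicLevelSet (hf : Measurable f) (hS : MeasurableSet S)
    (g : α → ℝ≥0∞) :
    ∫⁻ x in S, g x ∂μ = ∑' k, ∫⁻ x in S ∩ dyadicLevelSet f k, g x ∂μ := by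
  rw [← lintegral_iUnion (fun k => hS.inter (measurableSet_dyadicLevelSet hf k))
    (fun j k hjk => ((pairwise_disjoint_dyadicLevelSet f hjk).mono inter_subset_right
      inter_subset_right)), ← inter_iUnion, iUnion_dyadicLevelSet, inter_univ]

theorem setLIntegral_ofReal_abs_mul_le (hf : Measurable f) (hS : MeasurableSet S)
    (g : α → ℝ≥0∞) :
    ∫⁻ x in S, ENNReal.ofReal |f x| * g x ∂μ ≤
      2 * ∑' k, 2 ^ k * ∫⁻ x in S ∩ dyadicLevelSet f k, g x ∂μ := by
  rw [setLIntegral_eq_tsum_dyadicLevelSet hf hS, ← ENNReal.tsum_mul_left]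
  refine ENNReal.tsum_le_tsum fun k => ?_
  rw [← mul_assoc, ← lintegral_const_mul' _ _ (by finiteness)]
  exact setLIntegral_mono' (hS.inter (measurableSet_dyadicLevelSet hf k)) fun x hx =>
    mul_le_mul_left (ofReal_abs_le_of_mem_dyadicLevelSet hx.2) _

theorem lintegral_lintegral_ofReal_abs_mul_le [SFinite μ] (hf : Measurable f)
    (hS : MeasurableSet S) {K : α → α → ℝ≥0∞} (hK : Measurable (uncurry K)) :
    ∫⁻ x in S, ∫⁻ y in S, ENNReal.ofReal |f x| * ENNReal.ofReal |f y| * K x y ∂μ ∂μ ≤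
      4 * ∑' j, 2 ^ j * ∑' k, 2 ^ k *
        ∫⁻ x in S ∩ dyadicLevelSet f j, ∫⁻ y in S ∩ dyadicLevelSet f k, K x y ∂μ ∂μ := by
  set E := fun k => S ∩ dyadicLevelSet f k
  have hJ : ∀ k, Measurable fun x => ∫⁻ y in E k, K x y ∂μ := fun k =>
    hK.lintegral_prod_right'
  calc ∫⁻ x in S, ∫⁻ y in S, ENNReal.ofReal |f x| * ENNReal.ofReal |f y| * K x y ∂μ ∂μ
      ≤ ∫⁻ x in S, ENNReal.ofReal |f x| * (2 * ∑' k, 2 ^ k * ∫⁻ y in E k, K x y ∂μ) ∂μ := by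
        refine lintegral_mono fun x => ?_
        simp_rw [mul_assoc]
        rw [lintegral_const_mul' _ _ ENNReal.ofReal_ne_top]
        exact mul_le_mul_right (setLIntegral_ofReal_abs_mul_le hf hS _) _
    _ ≤ 2 * ∑' j, 2 ^ j * ∫⁻ x in E j, 2 * ∑' k, 2 ^ k * ∫⁻ y in E k, K x y ∂μ ∂μ :=
        setLIntegral_ofReal_abs_mul_le hf hS _
    _ = 4 * ∑' j, 2 ^ j * ∑' k, 2 ^ k * ∫⁻ x in E j, ∫⁻ y in E k, K x y ∂μ ∂μ := by
        have hinner : ∀ j, ∫⁻ x in E j, 2 * ∑' k, 2 ^ k * ∫⁻ y in E k, K x y ∂μ ∂μ =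
            2 * ∑' k, 2 ^ k * ∫⁻ x in E j, ∫⁻ y in E k, K x y ∂μ ∂μ := fun j => by
          rw [lintegral_const_mul' _ _ (by norm_num),
            lintegral_tsum fun k => ((hJ k).const_mul _).aemeasurable]
          simp_rw [lintegral_const_mul _ (hJ _)]
        simp_rw [hinner, mul_left_comm _ (2 : ℝ≥0∞), ENNReal.tsum_mul_left, ← mul_assoc]
        norm_num

theorem tsum_two_rpow_mul_measure_dyadicLevelSet_le (hf : Measurable f) (hS : MeasurableSet S)
    {p : ℝ} (hp : 1 ≤ p) :
    ∑' k : ℕ, (2 : ℝ≥0∞) ^ (k * p) * μ (S ∩ dyadicLevelSet f k) ≤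
      2 ^ (p - 1) * (μ S + ∫⁻ x in S, ENNReal.ofReal (|f x| ^ p) ∂μ) := by
  have hpointwise : ∀ k, ∀ x ∈ dyadicLevelSet f k,
      (2 : ℝ≥0∞) ^ (k * p) ≤ 2 ^ (p - 1) * (1 + ENNReal.ofReal (|f x| ^ p)) := by
    intro k x hx
    calc (2 : ℝ≥0∞) ^ (k * p) = ENNReal.ofReal (2 ^ k) ^ p := by
          rw [ENNReal.rpow_mul, ENNReal.rpow_natCast, ENNReal.ofReal_pow zero_le_two,
            ENNReal.ofReal_ofNat]
      _ ≤ (1 + ENNReal.ofReal |f x|) ^ p := by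
          rw [← ENNReal.ofReal_one, ← ENNReal.ofReal_add zero_le_one (abs_nonneg _)]
          gcongr
          exact two_pow_le_of_mem_dyadicLevelSet hx
      _ ≤ 2 ^ (p - 1) * (1 + ENNReal.ofReal (|f x| ^ p)) := by
          rw [← ENNReal.ofReal_rpow_of_nonneg (abs_nonneg _) (by linarith)]
          simpa using ENNReal.rpow_add_le_mul_rpow_add_rpow 1 (ENNReal.ofReal |f x|) hp
  calc ∑' k : ℕ, (2 : ℝ≥0∞) ^ (k * p) * μ (S ∩ dyadicLevelSet f k)
      = ∑' k : ℕ, ∫⁻ _ in S ∩ dyadicLevelSet f k, (2 : ℝ≥0∞) ^ (k * p) ∂μ := by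
        simp_rw [setLIntegral_const]
    _ ≤ ∑' k, ∫⁻ x in S ∩ dyadicLevelSet f k, 2 ^ (p - 1) * (1 + ENNReal.ofReal (|f x| ^ p)) ∂μ :=
        ENNReal.tsum_le_tsum fun k => setLIntegral_mono'
          (hS.inter (measurableSet_dyadicLevelSet hf k)) fun x hx => hpointwise k x hx.2
    _ = 2 ^ (p - 1) * (μ S + ∫⁻ x in S, ENNReal.ofReal (|f x| ^ p) ∂μ) := by
        rw [← setLIntegral_eq_tsum_dyadicLevelSet hf hS, lintegral_const_mul' _ _ (by finiteness),
          lintegral_add_left measurable_const, setLIntegral_const, one_mul]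

end DyadicLevelSets

theorem L_one_over_H_subset_absH_general
    (H T : ℝ) (hH : H ∈ Set.Ioo (1/2 : ℝ) 1)
    (f : ℝ → ℝ) (hf : Measurable f)
    (hint : (∫⁻ u in Set.Ioc (0 : ℝ) T, ENNReal.ofReal (|f u| ^ (1/H))) < ⊤) :
    (∫⁻ u in Set.Ioc (0 : ℝ) T, ∫⁻ v in Set.Ioc (0 : ℝ) T,
      ENNReal.ofReal (|f u| * |f v| * |u - v| ^ (2*H - 2))) < ⊤ := by
  obtain ⟨hH₁, hH₂⟩ := hH
  have hH₀ : 0 < H := by linarith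
  have hp : 1 < 1 / H := by rw [lt_div_iff₀ hH₀]; linarith
  have hmoments : ∑' k : ℕ, (2 : ℝ≥0∞) ^ (k * (1 / H)) *
      volume (Ioc 0 T ∩ dyadicLevelSet f k) ≠ ⊤ :=
    ne_top_of_le_ne_top (ENNReal.mul_ne_top (ENNReal.rpow_ne_top_of_nonneg (by linarith)
      ENNReal.ofNat_ne_top) (ENNReal.add_ne_top.2 ⟨measure_Ioc_lt_top.ne, hint.ne⟩))
      (tsum_two_rpow_mul_measure_dyadicLevelSet_le hf measurableSet_Ioc hp.le)
  have hsplit : ∀ u v, ENNReal.ofReal (|f u| * |f v| * |u - v| ^ (2 * H - 2)) =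
      ENNReal.ofReal |f u| * ENNReal.ofReal |f v| * ENNReal.ofReal (|u - v| ^ (2 * H - 2)) :=
    fun u v => by rw [ENNReal.ofReal_mul (by positivity), ENNReal.ofReal_mul (abs_nonneg _)]
  simp_rw [hsplit]
  refine lt_of_le_of_lt (lintegral_lintegral_ofReal_abs_mul_le hf measurableSet_Ioc
    (by fun_prop)) (ENNReal.mul_lt_top (by norm_num) (lt_top_iff_ne_top.2 ?_))
  exact tsum_two_pow_mul_tsum_two_pow_mul_ne_top (θ := 2 * H - 2 + 1) (by linarith) hp
    (by field_simp; ring) hmoments ENNReal.ofReal_ne_top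
    (fun j k => lintegral_lintegral_abs_sub_rpow_comm _ _)
    (fun j k => lintegral_lintegral_abs_sub_rpow_le (by linarith) (by linarith) _ _)

/-- The inclusion `L^{1/H}([0,T]) ⊂ |ℋ|` (equation (2) of the paper): for `H > 1/2`, if
`∫₀ᵀ |f(u)|^{1/H} du < ∞` then `∫₀ᵀ ∫₀ᵀ |f(u)||f(v)||u-v|^{2H-2} du dv < ∞`. -/
theorem L_one_over_H_subset_absH
    (H T : ℝ) (hH : H ∈ Set.Ioo (1/2 : ℝ) 1) (hT : 0 < T)
    (f : ℝ → ℝ) (hf : Measurable f)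
    (hint : (∫⁻ u in Set.Ioc (0 : ℝ) T, ENNReal.ofReal (|f u| ^ (1/H))) < ⊤) :
    (∫⁻ u in Set.Ioc (0 : ℝ) T, ∫⁻ v in Set.Ioc (0 : ℝ) T,
      ENNReal.ofReal (|f u| * |f v| * |u - v| ^ (2*H - 2))) < ⊤ :=
  L_one_over_H_subset_absH_general H T hH f hf hint
end
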